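/- The unguarded-recursion axiom (Ung2) is sound: for every expression E with at most X free, rec X.(τ.X + E) ≃ rec X.(τ.pri(E)). -/

import Mathlib

namespace PrioCalc

inductive Act where
  | tau : Act
  | vis : ℕ → Act
  | delta : Act
deriving DecidableEq

inductive Expr where
  | nil : Expr
  | var : ℕ → Expr
  | pre : Act → Expr → Expr
  | sum : Expr → Expr → Expr
  | recur : ℕ → Expr → Expr
  | pri : Expr → Expr
deriving DecidableEq

/-- Syntactic substitution of `F` for the free occurrences of variable `x`. -/
def subst : Expr → ℕ → Expr → Expr
  | .nil, _, _ => .nil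
  | .var m, x, F => if m = x then F else .var m
  | .pre γ E, x, F => .pre γ (subst E x F)
  | .sum E G, x, F => .sum (subst E x F) (subst G x F)
  | .recur y E, x, F => if y = x then .recur y E else .recur y (subst E x F)
  | .pri E, x, F => .pri (subst E x F)

/-- `free E x` : `x` occurs free in `E`. -/
def free : Expr → ℕ → Prop
  | .nil, _ => False
  | .var m, x => m = x
  | .pre _ E, x => free E x
  | .sum E G, x => free E x ∨ free G x
  | .recur y E, x => x ≠ y ∧ free E x
  | .pri E, x => free E x

def Closed (E : Expr) : Prop := ∀ x, ¬ free E x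

/-- Standard (non-δ) transitions; these never depend on δ-transitions. -/
inductive StepStd : Expr → Act → Expr → Prop where
  | pre {α : Act} (h : α ≠ Act.delta) (E : Expr) : StepStd (.pre α E) α E
  | sumL {P α P'} (Q : Expr) : StepStd P α P' → StepStd (.sum P Q) α P'
  | sumR {Q α Q'} (P : Expr) : StepStd Q α Q' → StepStd (.sum P Q) α Q'
  | unf {x E γ P'} : StepStd (subst E x (.recur x E)) γ P' → StepStd (.recur x E) γ P'
  | pri {P α P'} : StepStd P α P' → StepStd (.pri P) α P'

def CanTau (P : Expr) : Prop := ∃ P', StepStd P Act.tau P'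

/-- δ-transitions (stratified: the negative premise refers to standard transitions). -/
inductive StepDel : Expr → Expr → Prop where
  | pre (E : Expr) : StepDel (.pre Act.delta E) E
  | sumL {P P'} (Q : Expr) : StepDel P P' → ¬ CanTau Q → StepDel (.sum P Q) P'
  | sumR {Q Q'} (P : Expr) : StepDel Q Q' → ¬ CanTau P → StepDel (.sum P Q) Q'
  | unf {x E P'} : StepDel (subst E x (.recur x E)) P' → StepDel (.recur x E) P'

/-- The full (prioritized) transition relation. -/
def Step (P : Expr) (γ : Act) (Q : Expr) : Prop :=
  if γ = Act.delta then StepDel P Q else StepStd P γ Q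

def TauStar : Expr → Expr → Prop :=
  Relation.ReflTransGen (fun P Q => Step P Act.tau Q)

/-- Weak transition `==γ==>` : τ* γ τ* (at least one γ step). -/
def Weak (P : Expr) (γ : Act) (Q : Expr) : Prop :=
  ∃ P₁ P₂, TauStar P P₁ ∧ Step P₁ γ P₂ ∧ TauStar P₂ Q

/-- Weak transition `==γ̂==>`. -/
def WeakHat (P : Expr) (γ : Act) (Q : Expr) : Prop :=
  if γ = Act.tau then TauStar P Q else Weak P γ Q

def IsWeakBisim (β : Expr → Expr → Prop) : Prop :=
  ∀ P Q, β P Q →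
    (∀ γ P', Step P γ P' → ∃ Q', WeakHat Q γ Q' ∧ β P' Q') ∧
    (∀ γ Q', Step Q γ Q' → ∃ P', WeakHat P γ P' ∧ β P' Q')

/-- Weak bisimilarity `≈`. -/
def WBisim (P Q : Expr) : Prop := ∃ β, IsWeakBisim β ∧ β P Q

/-- Observational congruence `≃`. -/
def ObsCong (P Q : Expr) : Prop :=
  (∀ γ P', Step P γ P' → ∃ Q', Weak Q γ Q' ∧ WBisim P' Q') ∧
  (∀ γ Q', Step Q γ Q' → ∃ P', Weak P γ P' ∧ WBisim P' Q')

/-- Terms of the basic calculus (no occurrence of the auxiliary `pri` operator). -/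
def PriFree : Expr → Prop
  | .nil => True
  | .var _ => True
  | .pre _ E => PriFree E
  | .sum E F => PriFree E ∧ PriFree F
  | .recur _ E => PriFree E
  | .pri _ => False

/-- Every free occurrence of `x` in `E` is (strongly) guarded. -/
def GVar : Expr → ℕ → Prop
  | .nil, _ => True
  | .var m, x => m ≠ x
  | .pre γ E, x => γ = Act.tau → GVar E x
  | .sum E F, x => GVar E x ∧ GVar F x
  | .recur y E, x => y ≠ x → GVar E x
  | .pri E, x => GVar E x

/-- `E` is (strongly) guarded: every recursion subterm is guarded. -/
def Guarded : Expr → Prop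
  | .nil => True
  | .var _ => True
  | .pre _ E => Guarded E
  | .sum E F => Guarded E ∧ Guarded F
  | .recur y E => GVar E y ∧ Guarded E
  | .pri E => Guarded E

/-- Some free occurrence of `x` in `E` is unguarded (not under a non-τ prefix). -/
def UnguardedVar : Expr → ℕ → Prop
  | .nil, _ => False
  | .var m, x => m = x
  | .pre γ E, x => γ = Act.tau ∧ UnguardedVar E x
  | .sum E F, x => UnguardedVar E x ∨ UnguardedVar F x
  | .recur y E, x => y ≠ x ∧ UnguardedVar E x
  | .pri E, x => UnguardedVar E x

/-- `x` is serial in `E` : every subexpression containing `x` free, apart from `x`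
itself, is a prefix, a sum or a recursion. -/
def SerialVar : Expr → ℕ → Prop
  | .nil, _ => True
  | .var _, _ => True
  | .pre _ E, x => SerialVar E x
  | .sum E F, x => SerialVar E x ∧ SerialVar F x
  | .recur y E, x => y = x ∨ SerialVar E x
  | .pri E, x => ¬ free E x

/-- Simultaneous substitution of closed terms for free variables. -/
def msubst : Expr → (ℕ → Expr) → Expr
  | .nil, _ => .nil
  | .var m, σ => σ m
  | .pre γ E, σ => .pre γ (msubst E σ)
  | .sum E F, σ => .sum (msubst E σ) (msubst F σ)
  | .recur y E, σ => .recur y (msubst E (Function.update σ y (.var y)))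
  | .pri E, σ => .pri (msubst E σ)

/-- Observational congruence on open terms (via closed substitutions). -/
def ObsCongO (E F : Expr) : Prop :=
  ∀ σ : ℕ → Expr, (∀ n, Closed (σ n)) → ObsCong (msubst E σ) (msubst F σ)

/-- The axiom system 𝒜. -/
inductive Prov : Expr → Expr → Prop where
  | refl (E) : Prov E E
  | symm {E F} : Prov E F → Prov F E
  | trans {E F G} : Prov E F → Prov F G → Prov E G
  | congPre (γ) {E F} : Prov E F → Prov (.pre γ E) (.pre γ F)
  | congSum {E E' F F'} : Prov E E' → Prov F F' → Prov (.sum E F) (.sum E' F')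
  | congRec (x) {E F} : Prov E F → Prov (.recur x E) (.recur x F)
  | congPri {E F} : Prov E F → Prov (.pri E) (.pri F)
  | a1 (E F) : Prov (.sum E F) (.sum F E)
  | a2 (E F G) : Prov (.sum (.sum E F) G) (.sum E (.sum F G))
  | a3 (E) : Prov (.sum E E) E
  | a4 (E) : Prov (.sum E .nil) E
  | tau1 (γ E) : Prov (.pre γ (.pre Act.tau E)) (.pre γ E)
  | tau2 (E) : Prov (.sum E (.pre Act.tau E)) (.pre Act.tau E)
  | tau3 (γ E F) :
      Prov (.sum (.pre γ (.sum E (.pre Act.tau F))) (.pre γ F))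
           (.pre γ (.sum E (.pre Act.tau F)))
  | pri1 : Prov (.pri .nil) .nil
  | pri2 {α} (h : α ≠ Act.delta) (E) : Prov (.pri (.pre α E)) (.pre α E)
  | pri3 (E) : Prov (.pri (.pre Act.delta E)) .nil
  | pri4 (E F) : Prov (.pri (.sum E F)) (.sum (.pri E) (.pri F))
  | pri5 (E) : Prov (.pri (.pri E)) (.pri E)
  | pri6 (E F) : Prov (.sum (.pre Act.tau E) F) (.sum (.pre Act.tau E) (.pri F))
  | rec1 (x E) : Prov (.recur x E) (subst E x (.recur x E))
  | rec2 {x E F} (hs : SerialVar E x) (hg : GVar E x) :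
      Prov F (subst E x F) → Prov F (.recur x E)
  | ung1 (x E) : Prov (.recur x (.sum (.var x) E)) (.recur x E)
  | ung2 (x E) :
      Prov (.recur x (.sum (.pre Act.tau (.var x)) E)) (.recur x (.pre Act.tau (.pri E)))
  | ung3 (x E F) :
      Prov (.recur x (.sum (.pre Act.tau (.sum (.var x) E)) F))
           (.recur x (.sum (.sum (.pre Act.tau (.var x)) E) F))
  | ung4 (x E F) :
      Prov (.recur x (.sum (.pre Act.tau (.sum (.pri (.var x)) E)) F))
           (.recur x (.sum (.sum (.pre Act.tau (.var x)) E) F))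

/-- Standard equation sets: formal variables are `X i = var i` for `i < n`,
free variables are variables `≥ n`. -/
structure StdEqSet (n : ℕ) where
  pres : Fin n → List (Act × Fin n)
  frees : Fin n → List ℕ
  frees_ge : ∀ i, ∀ w ∈ frees i, n ≤ w

/-- The body `H_i{Ẽ/X̃}` of the `i`-th equation with expressions `Es` for the
formal variables. -/
def instBody {n : ℕ} (S : StdEqSet n) (Es : Fin n → Expr) (i : Fin n) : Expr :=
  (S.pres i).foldr (fun p acc => Expr.sum (Expr.pre p.1 (Es p.2)) acc)
    ((S.frees i).foldr (fun w acc => Expr.sum (Expr.var w) acc) Expr.nil)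

/-- `E` provably satisfies `S` (distinguished variable `X 0`). -/
def ProvSat {n : ℕ} (hn : 0 < n) (E : Expr) (S : StdEqSet n) : Prop :=
  ∃ Es : Fin n → Expr, Es ⟨0, hn⟩ = E ∧
    (∀ i x, free (Es i) x → n ≤ x) ∧
    (∀ i, Prov (Es i) (instBody S Es i))

/-- No equation contains both a τ-prefixed and a δ-prefixed summand. -/
def Prioritized {n : ℕ} (S : StdEqSet n) : Prop :=
  ∀ i, (∃ j, (Act.tau, j) ∈ S.pres i) → ∀ j, (Act.delta, j) ∉ S.pres i

/-- No cycle of unguarded (i.e. τ-prefixed) dependencies. -/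
def EqGuarded {n : ℕ} (S : StdEqSet n) : Prop :=
  ∀ i : Fin n, ¬ Relation.TransGen (fun i j : Fin n => (Act.tau, j) ∈ S.pres i) i i

/-- Delete every δ-prefixed summand from equations that also contain a
τ-prefixed summand. -/
def prioritize {n : ℕ} (S : StdEqSet n) : StdEqSet n where
  pres i := if (S.pres i).any (fun p => decide (p.1 = Act.tau))
            then (S.pres i).filter (fun p => decide (p.1 ≠ Act.delta))
            else S.pres i
  frees := S.frees
  frees_ge := S.frees_ge

/-!
Write `P = rec X.(τ.X + E)` and `Q = rec X.τ.pri(E)`. Because `P` can always τ-loop to itself,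
it has no δ-move, and its other moves are the non-δ moves of `E[P]`; `Q` only moves by τ to
`pri(E[Q])`. The weak bisimulation relates two terms that are one context with `P` in the holes
of the first and `Q` in the holes of the second, together with the pairs `(A, pri(E[Q]))` for `A`
related to `Q`. Moves of the context are matched by the same context. δ-moves are matched because
`P` and `Q` both have a τ-move and no δ-move, so a hole pre-empts the same summands on both sides.
A move of `P` in a hole is answered by the τ-move of `Q` followed by the corresponding move of
`E[Q]`; since `P` is unguarded, such a move can pass through `P` again, so this analysis is carried
out by induction on the derivation of the move.
-/

theorem subst_eq_self_of_not_free {E : Expr} {y : ℕ} (h : ¬ free E y) (F : Expr) :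
    subst E y F = E := by
  induction E with
  | nil => rfl
  | var m => simp_all [subst, free]
  | pre α E ih => simp_all [subst, free]
  | sum E G ihE ihG => simp_all [subst, free]
  | recur w E ih =>
    by_cases hw : w = y
    · simp [subst, hw]
    · have hE : ¬ free E y := fun hE => h ⟨Ne.symm hw, hE⟩
      simp [subst, hw, ih hE]
  | pri E ih => simp_all [subst, free]

theorem Closed.subst_eq {R : Expr} (hR : Closed R) (y : ℕ) (F : Expr) : subst R y F = R :=
  subst_eq_self_of_not_free (hR y) F

theorem StepStd.ne_delta {A B : Expr} {γ : Act} (h : StepStd A γ B) : γ ≠ .delta := by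
  induction h with
  | pre hα => exact hα
  | _ => assumption

theorem StepStd.step {A B : Expr} {γ : Act} (h : StepStd A γ B) : Step A γ B := by
  simpa [Step, h.ne_delta] using h

theorem StepDel.step {A B : Expr} (h : StepDel A B) : Step A .delta B := by
  simpa [Step] using h

theorem Weak.single {A B : Expr} {γ : Act} (h : Step A γ B) : Weak A γ B :=
  ⟨A, B, .refl, h, .refl⟩

theorem Weak.tau_cons {A B C : Expr} {γ : Act} (h : Step A .tau B) (hw : Weak B γ C) :
    Weak A γ C :=
  let ⟨B₁, B₂, h₁, h₂, h₃⟩ := hw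
  ⟨B₁, B₂, .head h h₁, h₂, h₃⟩

theorem weakHat_tau_iff {A B : Expr} : WeakHat A .tau B ↔ TauStar A B := by
  simp [WeakHat]

theorem weakHat_tau_refl (A : Expr) : WeakHat A .tau A :=
  weakHat_tau_iff.2 Relation.ReflTransGen.refl

theorem Weak.weakHat {A B : Expr} {γ : Act} (h : Weak A γ B) : WeakHat A γ B := by
  by_cases hγ : γ = .tau
  · subst hγ
    obtain ⟨A₁, A₂, h₁, h₂, h₃⟩ := h
    exact weakHat_tau_iff.2 (Relation.ReflTransGen.trans h₁ (.head h₂ h₃))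
  · simpa [WeakHat, hγ] using h

theorem Weak.weakHat_of_forall_step {Q Q' B : Expr} {γ : Act}
    (hQ : ∀ γ' Q'', Step Q γ' Q'' → γ' = .tau ∧ Q'' = Q') (h : Weak Q γ B) :
    WeakHat Q' γ B := by
  obtain ⟨Q₁, Q₂, h₁, h₂, h₃⟩ := h
  rcases h₁.cases_head with rfl | ⟨Q₃, hQ₃, h₁⟩
  · obtain ⟨rfl, rfl⟩ := hQ _ _ h₂
    exact weakHat_tau_iff.2 h₃
  · obtain ⟨-, rfl⟩ := hQ _ _ hQ₃
    exact Weak.weakHat ⟨Q₁, Q₂, h₁, h₂, h₃⟩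

/-- `CtxRel R S A B`: `A` and `B` are one context, with its holes filled by `R` in `A` and by
`S` in `B`. -/
inductive CtxRel (R S : Expr) : Expr → Expr → Prop
  | hole : CtxRel R S R S
  | nil : CtxRel R S .nil .nil
  | var (m : ℕ) : CtxRel R S (.var m) (.var m)
  | pre (α : Act) {A B : Expr} : CtxRel R S A B → CtxRel R S (.pre α A) (.pre α B)
  | sum {A₁ A₂ B₁ B₂ : Expr} :
      CtxRel R S A₁ B₁ → CtxRel R S A₂ B₂ → CtxRel R S (.sum A₁ A₂) (.sum B₁ B₂)
  | recur (y : ℕ) {A B : Expr} : CtxRel R S A B → CtxRel R S (.recur y A) (.recur y B)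
  | pri {A B : Expr} : CtxRel R S A B → CtxRel R S (.pri A) (.pri B)

def HasStepsOf (B S : Expr) : Prop := ∀ γ S', StepStd S γ S' → StepStd B γ S'

namespace CtxRel

variable {R S : Expr}

theorem refl (A : Expr) : CtxRel R S A A := by
  induction A with
  | nil => exact .nil
  | var m => exact .var m
  | pre α A ih => exact .pre α ih
  | sum A₁ A₂ ih₁ ih₂ => exact .sum ih₁ ih₂
  | recur y A ih => exact .recur y ih
  | pri A ih => exact .pri ih

theorem symm {A B : Expr} (h : CtxRel R S A B) : CtxRel S R B A := by
  induction h with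
  | hole => exact .hole
  | nil => exact .nil
  | var m => exact .var m
  | pre α _ ih => exact .pre α ih
  | sum _ _ ih₁ ih₂ => exact .sum ih₁ ih₂
  | recur y _ ih => exact .recur y ih
  | pri _ ih => exact .pri ih

theorem subst (hR : Closed R) (hS : Closed S) {A B C D : Expr} (hAB : CtxRel R S A B)
    (hCD : CtxRel R S C D) (y : ℕ) :
    CtxRel R S (PrioCalc.subst A y C) (PrioCalc.subst B y D) := by
  induction hAB with
  | hole => rw [hR.subst_eq, hS.subst_eq]; exact .hole
  | nil => exact .nil
  | var m => by_cases hm : m = y <;> simp [PrioCalc.subst, hm, hCD, CtxRel.var]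
  | pre α _ ih => exact .pre α ih
  | sum _ _ ih₁ ih₂ => exact .sum ih₁ ih₂
  | recur w h ih =>
    by_cases hw : w = y
    · simpa [PrioCalc.subst, hw] using CtxRel.recur w h
    · simpa [PrioCalc.subst, hw] using CtxRel.recur w ih
  | pri _ ih => exact .pri ih

/-- The last conjunct has to be established inside the induction: unfolding an unguarded
recursion `R` may reach the hole `R` again. -/
theorem stepStd (hR : Closed R) (hS : Closed S) {A A' : Expr} {γ : Act} (h : StepStd A γ A') :
    ∀ {B}, CtxRel R S A B →
      (∃ B', StepStd B γ B' ∧ CtxRel R S A' B') ∨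
      (HasStepsOf B S ∧ StepStd R γ A' ∧
        ∀ y R₀, R = .recur y R₀ →
          ∃ B', StepStd (PrioCalc.subst R₀ y S) γ B' ∧ CtxRel R S A' B') := by
  induction h with
  | pre hα E =>
    rintro B (_ | _ | _ | ⟨_, hAB⟩)
    · exact .inr ⟨fun _ _ h => h, .pre hα E, nofun⟩
    · exact .inl ⟨_, .pre hα _, hAB⟩
  | sumL Q h ih =>
    rintro B (_ | _ | _ | _ | ⟨hAB, -⟩)
    · exact .inr ⟨fun _ _ h => h, .sumL Q h, nofun⟩
    · rcases ih hAB with ⟨B', hB', hA'B'⟩ | ⟨hB, hR', hrec⟩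
      · exact .inl ⟨B', .sumL _ hB', hA'B'⟩
      · exact .inr ⟨fun _ _ h => .sumL _ (hB _ _ h), hR', hrec⟩
  | sumR P h ih =>
    rintro B (_ | _ | _ | _ | ⟨-, hAB⟩)
    · exact .inr ⟨fun _ _ h => h, .sumR P h, nofun⟩
    · rcases ih hAB with ⟨B', hB', hA'B'⟩ | ⟨hB, hR', hrec⟩
      · exact .inl ⟨B', .sumR _ hB', hA'B'⟩
      · exact .inr ⟨fun _ _ h => .sumR _ (hB _ _ h), hR', hrec⟩
  | @unf y A₀ γ A' h ih =>
    rintro B (_ | _ | _ | _ | _ | ⟨_, hAB⟩)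
    · have hunf := ih ((refl A₀).subst hR hS .hole y)
      refine .inr ⟨fun _ _ h => h, .unf h, ?_⟩
      rintro y R₀ ⟨⟩
      rcases hunf with hB | ⟨-, -, hrec⟩
      · exact hB
      · exact hrec y A₀ rfl
    · rcases ih (hAB.subst hR hS (.recur y hAB) y) with ⟨B', hB', hA'B'⟩ | ⟨hB, hR', hrec⟩
      · exact .inl ⟨B', .unf hB', hA'B'⟩
      · exact .inr ⟨fun _ _ h => .unf (hB _ _ h), hR', hrec⟩
  | pri h ih =>
    rintro B (_ | _ | _ | _ | _ | _ | ⟨hAB⟩)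
    · exact .inr ⟨fun _ _ h => h, .pri h, nofun⟩
    · rcases ih hAB with ⟨B', hB', hA'B'⟩ | ⟨hB, hR', hrec⟩
      · exact .inl ⟨B', .pri hB', hA'B'⟩
      · exact .inr ⟨fun _ _ h => .pri (hB _ _ h), hR', hrec⟩

theorem canTau (hR : Closed R) (hS : Closed S) (hRτ : CanTau R) {A B : Expr}
    (hAB : CtxRel R S A B) (hB : CanTau B) : CanTau A := by
  obtain ⟨B', hB'⟩ := hB
  rcases hAB.symm.stepStd hS hR hB' with ⟨A', hA', -⟩ | ⟨hA, -⟩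
  · exact ⟨A', hA'⟩
  · obtain ⟨R', hR'⟩ := hRτ
    exact ⟨R', hA _ _ hR'⟩

/-- The τ-step of `R` makes the priority pre-emptions agree on both sides. -/
theorem stepDel (hR : Closed R) (hS : Closed S) (hRδ : ∀ R', ¬ StepDel R R') (hRτ : CanTau R)
    {A A' : Expr} (h : StepDel A A') :
    ∀ {B}, CtxRel R S A B → ∃ B', StepDel B B' ∧ CtxRel R S A' B' := by
  induction h with
  | pre E =>
    rintro B (_ | _ | _ | ⟨_, hAB⟩)
    · exact absurd (.pre E) (hRδ E)
    · exact ⟨_, .pre _, hAB⟩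
  | sumL Q h hQ ih =>
    rintro B (_ | _ | _ | _ | ⟨hAB, hQB⟩)
    · exact absurd (.sumL Q h hQ) (hRδ _)
    · obtain ⟨B', hB', hA'B'⟩ := ih hAB
      exact ⟨B', .sumL _ hB' fun hB => hQ (hQB.canTau hR hS hRτ hB), hA'B'⟩
  | sumR P h hP ih =>
    rintro B (_ | _ | _ | _ | ⟨hPB, hAB⟩)
    · exact absurd (.sumR P h hP) (hRδ _)
    · obtain ⟨B', hB', hA'B'⟩ := ih hAB
      exact ⟨B', .sumR _ hB' fun hB => hP (hPB.canTau hR hS hRτ hB), hA'B'⟩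
  | @unf y A₀ A' h ih =>
    rintro B (_ | _ | _ | _ | _ | ⟨_, hAB⟩)
    · exact absurd (.unf h) (hRδ _)
    · obtain ⟨B', hB', hA'B'⟩ := ih (hAB.subst hR hS (.recur y hAB) y)
      exact ⟨B', .unf hB', hA'B'⟩

end CtxRel

namespace Ung2

def lhs (x : ℕ) (E : Expr) : Expr := .recur x (.sum (.pre .tau (.var x)) E)

def rhs (x : ℕ) (E : Expr) : Expr := .recur x (.pre .tau (.pri E))

variable {x : ℕ} {E : Expr}

theorem closed_lhs (hE : ∀ y, free E y → y = x) : Closed (lhs x E) := by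
  rintro y ⟨hyx, hy | hy⟩
  · exact hyx hy.symm
  · exact hyx (hE y hy)

theorem closed_rhs (hE : ∀ y, free E y → y = x) : Closed (rhs x E) :=
  fun y ⟨hyx, hy⟩ => hyx (hE y hy)

theorem subst_lhs_body (F : Expr) :
    subst (.sum (.pre .tau (.var x)) E) x F = .sum (.pre .tau F) (subst E x F) := by
  simp [subst]

theorem stepStd_lhs_tau : StepStd (lhs x E) .tau (lhs x E) :=
  .unf (subst_lhs_body _ ▸ .sumL _ (.pre (by decide) _))

theorem stepStd_lhs_of_body {γ : Act} {A : Expr} (h : StepStd (subst E x (lhs x E)) γ A) :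
    StepStd (lhs x E) γ A :=
  .unf (subst_lhs_body _ ▸ .sumR _ h)

theorem not_stepDel_lhs (A : Expr) : ¬ StepDel (lhs x E) A := by
  intro h
  cases h with
  | unf h =>
    rw [subst_lhs_body] at h
    cases h with
    | sumL _ h => cases h
    | sumR _ _ hτ => exact hτ ⟨_, .pre (by decide) _⟩

theorem stepStd_rhs_iff {γ : Act} {B : Expr} :
    StepStd (rhs x E) γ B ↔ γ = .tau ∧ B = .pri (subst E x (rhs x E)) := by
  constructor
  · intro h
    cases h with
    | unf h =>
      cases h
      exact ⟨rfl, rfl⟩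
  · rintro ⟨rfl, rfl⟩
    exact .unf (.pre (by decide) _)

theorem stepStd_rhs_tau : StepStd (rhs x E) .tau (.pri (subst E x (rhs x E))) :=
  stepStd_rhs_iff.2 ⟨rfl, rfl⟩

theorem not_stepDel_rhs (B : Expr) : ¬ StepDel (rhs x E) B := by
  intro h
  cases h with
  | unf h => cases h

theorem eq_of_step_rhs {γ : Act} {B : Expr} (h : Step (rhs x E) γ B) :
    γ = .tau ∧ B = .pri (subst E x (rhs x E)) := by
  unfold Step at h
  split_ifs at h
  · exact absurd h (not_stepDel_rhs B)
  · exact stepStd_rhs_iff.1 h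

/-- The second kind of pairs answers the τ-loop of `lhs` by the τ-step of `rhs`. -/
def Rel (x : ℕ) (E : Expr) (A B : Expr) : Prop :=
  CtxRel (lhs x E) (rhs x E) A B ∨
    (CtxRel (lhs x E) (rhs x E) A (rhs x E) ∧ B = .pri (subst E x (rhs x E)))

theorem forth_of_ctxRel (hP : Closed (lhs x E)) (hQ : Closed (rhs x E))
    {A B A' : Expr} {γ : Act} (h : CtxRel (lhs x E) (rhs x E) A B)
    (hs : Step A γ A') : ∃ B', Weak B γ B' ∧ Rel x E A' B' := by
  unfold Step at hs
  split_ifs at hs with hγ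
  · subst hγ
    obtain ⟨B', hB', hA'B'⟩ := h.stepDel hP hQ not_stepDel_lhs ⟨_, stepStd_lhs_tau⟩ hs
    exact ⟨B', .single hB'.step, .inl hA'B'⟩
  rcases h.stepStd hP hQ hs with ⟨B', hB', hA'B'⟩ | ⟨hB, -, hunf⟩
  · exact ⟨B', .single hB'.step, .inl hA'B'⟩
  have hBτ := hB _ _ stepStd_rhs_tau
  obtain ⟨B', hB', hA'B'⟩ := hunf x _ rfl
  rw [subst_lhs_body] at hB'
  cases hB' with
  | sumL _ hB' =>
    cases hB'
    exact ⟨_, .single hBτ.step, .inr ⟨hA'B', rfl⟩⟩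
  | sumR _ hB' =>
    exact ⟨B', .tau_cons hBτ.step (.single (StepStd.pri hB').step), .inl hA'B'⟩

theorem back_of_ctxRel (hP : Closed (lhs x E)) (hQ : Closed (rhs x E))
    {A B B' : Expr} {γ : Act} (h : CtxRel (lhs x E) (rhs x E) A B)
    (hs : Step B γ B') : ∃ A', Weak A γ A' ∧ Rel x E A' B' := by
  unfold Step at hs
  split_ifs at hs with hγ
  · subst hγ
    obtain ⟨A', hA', hB'A'⟩ := h.symm.stepDel hQ hP not_stepDel_rhs ⟨_, stepStd_rhs_tau⟩ hs
    exact ⟨A', .single hA'.step, .inl hB'A'.symm⟩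
  rcases h.symm.stepStd hQ hP hs with ⟨A', hA', hB'A'⟩ | ⟨hA, hQs, -⟩
  · exact ⟨A', .single hA'.step, .inl hB'A'.symm⟩
  · obtain ⟨rfl, rfl⟩ := stepStd_rhs_iff.1 hQs
    exact ⟨lhs x E, .single (hA _ _ stepStd_lhs_tau).step, .inr ⟨.hole, rfl⟩⟩

theorem stepStd_body_rhs (hP : Closed (lhs x E)) (hQ : Closed (rhs x E))
    {γ : Act} {B' : Expr} (h : StepStd (subst E x (rhs x E)) γ B') :
    (γ = .tau ∧ B' = .pri (subst E x (rhs x E))) ∨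
      ∃ A', StepStd (lhs x E) γ A' ∧ CtxRel (lhs x E) (rhs x E) A' B' := by
  have hbody : CtxRel (rhs x E) (lhs x E) (subst E x (rhs x E)) (subst E x (lhs x E)) :=
    (CtxRel.refl E).subst hQ hP .hole x
  rcases hbody.stepStd hQ hP h with ⟨A', hA', hB'A'⟩ | ⟨-, hQs, -⟩
  · exact .inr ⟨A', stepStd_lhs_of_body hA', hB'A'.symm⟩
  · exact .inl (stepStd_rhs_iff.1 hQs)

theorem forth_of_ctxRel_rhs (hP : Closed (lhs x E)) (hQ : Closed (rhs x E))
    {A A' : Expr} {γ : Act}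
    (h : CtxRel (lhs x E) (rhs x E) A (rhs x E)) (hs : Step A γ A') :
    ∃ B', WeakHat (.pri (subst E x (rhs x E))) γ B' ∧ Rel x E A' B' :=
  let ⟨B', hw, hr⟩ := forth_of_ctxRel hP hQ h hs
  ⟨B', hw.weakHat_of_forall_step fun _ _ => eq_of_step_rhs, hr⟩

theorem back_of_ctxRel_rhs (hP : Closed (lhs x E)) (hQ : Closed (rhs x E))
    {A B' : Expr} {γ : Act}
    (h : CtxRel (lhs x E) (rhs x E) A (rhs x E)) (hs : Step (.pri (subst E x (rhs x E))) γ B') :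
    ∃ A', WeakHat A γ A' ∧ Rel x E A' B' := by
  unfold Step at hs
  split_ifs at hs with hγ
  · cases hs
  rcases h.symm.stepStd hQ hP stepStd_rhs_tau with ⟨A₁, hA₁, h₁⟩ | ⟨hA, -, -⟩
  · obtain ⟨A', hw, hr⟩ := back_of_ctxRel hP hQ h₁.symm hs.step
    exact ⟨A', (Weak.tau_cons hA₁.step hw).weakHat, hr⟩
  cases hs with | pri hs => ?_
  rcases stepStd_body_rhs hP hQ hs with ⟨rfl, rfl⟩ | ⟨A', hA', hA'B'⟩
  · exact ⟨A, weakHat_tau_refl A, .inr ⟨h, rfl⟩⟩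
  · exact ⟨A', (Weak.single (hA _ _ hA').step).weakHat, .inl hA'B'⟩

theorem isWeakBisim_rel (hP : Closed (lhs x E)) (hQ : Closed (rhs x E)) :
    IsWeakBisim (Rel x E) := by
  rintro A B (h | ⟨h, rfl⟩)
  · exact ⟨fun _ _ hs => (forth_of_ctxRel hP hQ h hs).imp fun _ h => ⟨h.1.weakHat, h.2⟩,
      fun _ _ hs => (back_of_ctxRel hP hQ h hs).imp fun _ h => ⟨h.1.weakHat, h.2⟩⟩
  · exact ⟨fun _ _ => forth_of_ctxRel_rhs hP hQ h, fun _ _ => back_of_ctxRel_rhs hP hQ h⟩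

theorem obsCong_lhs_rhs (hP : Closed (lhs x E)) (hQ : Closed (rhs x E)) :
    ObsCong (lhs x E) (rhs x E) :=
  ⟨fun _ _ hs => (forth_of_ctxRel hP hQ .hole hs).imp fun _ ⟨hw, hr⟩ =>
      ⟨hw, _, isWeakBisim_rel hP hQ, hr⟩,
    fun _ _ hs => (back_of_ctxRel hP hQ .hole hs).imp fun _ ⟨hw, hr⟩ =>
      ⟨hw, _, isWeakBisim_rel hP hQ, hr⟩⟩

end Ung2

/-- soundness of (Ung2): rec X.(τ.X + E) ≃ rec X.(τ.pri(E)). -/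
theorem ung2_sound (x : ℕ) (E : Expr) (hE : ∀ y, free E y → y = x) :
    ObsCong (.recur x (.sum (.pre Act.tau (.var x)) E))
            (.recur x (.pre Act.tau (.pri E))) :=
  Ung2.obsCong_lhs_rhs (Ung2.closed_lhs hE) (Ung2.closed_rhs hE)

end PrioCalc
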